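/- arXiv:0910.5063 — 2 statements merged into one kernel-verified Lean document; each statement's English description precedes it below -/
import Mathlib

section
/- If d and p are coprime rational integers with gcd(d, 3) = 1 viewed inside ℤ[ω], then the cubic residue symbol (p/d)₃ = 1. -/
open NumberField

/-- The field `ℚ(ω)` with `ω = e^{2πi/3}`. -/
noncomputable abbrev K3 : Type := CyclotomicField 3 ℚ

noncomputable instance : NumberField K3 :=
  @IsCyclotomicExtension.numberField {3} ℚ K3 _ _ _ _ _ (CyclotomicField.isCyclotomicExtension 3 ℚ)

/-- The Eisenstein integers `ℤ[ω]`, realized as the ring of integers of `ℚ(ω)`. -/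
noncomputable abbrev R3 : Type := 𝓞 K3

/-- The norm `N(n)` of an Eisenstein integer. -/
noncomputable def eNorm (n : R3) : ℕ := Ideal.absNorm (Ideal.span {n})

/-!
Let `σ` be the automorphism of `ℤ[ω]` with `σ ω = ω²`; it fixes `p` and `d`.
For a prime `π ∣ d`, applying `σ` to `π ∣ p^k - (p/π)₃` with `k = (N π - 1)/3 = (N (σ π) - 1)/3`
gives `σ π ∣ p^k - (p/π)₃²` (as `σ` squares cube roots of unity), and since distinct cube roots of unity differ by a divisor
of `3` this forces `(p/σπ)₃ = (p/π)₃²`. Hence `(p/π)₃ (p/σπ)₃ = (p/π)₃³ = 1`, and by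
multiplicativity `(p/d)₃² = (p/d)₃ (p/σd)₃ = 1` and `(p/d)₃³ = 1`, so `(p/d)₃ = 1`.
-/

section CubeRootsOfUnity

variable {A : Type*} [CommRing A] {ω : A}

theorem pow_three_eq_one_of_sq_add_add_one (hω : ω ^ 2 + ω + 1 = 0) : ω ^ 3 = 1 := by
  linear_combination (ω - 1) * hω

theorem pow_three_eq_one_of_mem (hω : ω ^ 2 + ω + 1 = 0) {x : A}
    (hx : x ∈ ({1, ω, ω ^ 2} : Set A)) : x ^ 3 = 1 := by
  have hω3 := pow_three_eq_one_of_sq_add_add_one hω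
  rcases hx with rfl | rfl | rfl
  · exact one_pow 3
  · exact hω3
  · linear_combination (ω ^ 3 + 1) * hω3

theorem sq_mem_of_mem (hω : ω ^ 2 + ω + 1 = 0) {x : A}
    (hx : x ∈ ({1, ω, ω ^ 2} : Set A)) : x ^ 2 ∈ ({1, ω, ω ^ 2} : Set A) := by
  have hω3 := pow_three_eq_one_of_sq_add_add_one hω
  rcases hx with rfl | rfl | rfl
  · exact Or.inl (one_pow 2)
  · exact Or.inr (Or.inr rfl)
  · exact Or.inr (Or.inl (by linear_combination ω * hω3))

theorem map_eq_sq_of_mem {F : Type*} [FunLike F A A] [RingHomClass F A A] {f : F}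
    (hf : f ω = ω ^ 2) {x : A} (hx : x ∈ ({1, ω, ω ^ 2} : Set A)) : f x = x ^ 2 := by
  rcases hx with rfl | rfl | rfl
  · rw [map_one, one_pow]
  · exact hf
  · rw [map_pow, hf]

theorem eq_or_sub_dvd_three_of_mem (hω : ω ^ 2 + ω + 1 = 0) {x y : A}
    (hx : x ∈ ({1, ω, ω ^ 2} : Set A)) (hy : y ∈ ({1, ω, ω ^ 2} : Set A)) :
    x = y ∨ x - y ∣ 3 := by
  have hω3 := pow_three_eq_one_of_sq_add_add_one hω
  simp only [Set.mem_insert_iff, Set.mem_singleton_iff] at hx hy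
  rcases hx with hx | hx | hx <;> rcases hy with hy | hy | hy <;> subst x y
  · exact Or.inl rfl
  · exact Or.inr ⟨1 - ω ^ 2, by linear_combination hω - hω3⟩
  · exact Or.inr ⟨1 - ω, by linear_combination hω - hω3⟩
  · exact Or.inr ⟨ω ^ 2 - 1, by linear_combination hω - hω3⟩
  · exact Or.inl rfl
  · exact Or.inr ⟨ω ^ 2 - ω, by linear_combination hω + (ω - 2) * hω3⟩
  · exact Or.inr ⟨ω - 1, by linear_combination hω - hω3⟩
  · exact Or.inr ⟨ω - ω ^ 2, by linear_combination hω + (ω - 2) * hω3⟩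
  · exact Or.inl rfl

end CubeRootsOfUnity

theorem eq_one_of_forall_prime_dvd {α M : Type*} [CommMonoidWithZero α]
    [UniqueFactorizationMonoid α] [Monoid M] (f : α → M)
    (hmul : ∀ a b : α, f (a * b) = f a * f b) (hunit : ∀ u : α, IsUnit u → f u = 1)
    {d : α} (hd : d ≠ 0) (hprime : ∀ π : α, Prime π → π ∣ d → f π = 1) : f d = 1 := by
  suffices ∀ n : α, n ∣ d → f n = 1 from this d dvd_rfl
  intro n
  induction n using UniqueFactorizationMonoid.induction_on_prime with
  | h₁ => exact fun h => absurd (zero_dvd_iff.1 h) hd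
  | h₂ u hu => exact fun _ => hunit u hu
  | h₃ a π _ hπ ih =>
    intro hdvd
    rw [hmul, hprime π hπ (dvd_of_mul_right_dvd hdvd), ih (dvd_of_mul_left_dvd hdvd), one_mul]

instance : IsCyclotomicExtension {3} ℚ K3 := CyclotomicField.isCyclotomicExtension 3 ℚ

instance : IsPrincipalIdealRing R3 := IsCyclotomicExtension.Rat.three_pid K3

theorem dvd_eNorm (x : R3) : x ∣ (eNorm x : R3) :=
  Ideal.mem_span_singleton.mp (Ideal.absNorm_mem (Ideal.span {x}))

theorem eNorm_ne_three_of_not_dvd {x : R3} (hx : ¬ x ∣ 3) : eNorm x ≠ 3 :=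
  fun h => hx (by simpa [h] using dvd_eNorm x)

theorem eNorm_map (σ : R3 ≃ₐ[ℤ] R3) (x : R3) : eNorm (σ x) = eNorm x := by
  have h : Ideal.span {σ x} = Ideal.map (σ.toRingEquiv : R3 →+* R3) (Ideal.span {x}) := by
    rw [Ideal.map_span, Set.image_singleton]
    rfl
  rw [eNorm, eNorm, Ideal.absNorm_apply, Ideal.absNorm_apply, Submodule.cardQuot_apply,
    Submodule.cardQuot_apply]
  exact (Nat.card_congr (Ideal.quotientEquiv _ _ σ.toRingEquiv h).toEquiv).symm

theorem eq_or_eq_sq_of_sq_add_add_one {F : Type*} [Field F] {ζ w : F}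
    (hζ : ζ ^ 2 + ζ + 1 = 0) (hw : w ^ 2 + w + 1 = 0) : w = ζ ∨ w = ζ ^ 2 := by
  have hζ3 := pow_three_eq_one_of_sq_add_add_one hζ
  have h : (w - ζ) * (w - ζ ^ 2) = 0 := by linear_combination hw - w * hζ + hζ3
  rcases mul_eq_zero.1 h with h | h
  · exact Or.inl (sub_eq_zero.1 h)
  · exact Or.inr (sub_eq_zero.1 h)

theorem exists_algEquiv_apply_eq_sq (ω : R3) (hω : ω ^ 2 + ω + 1 = 0) :
    ∃ σ : R3 ≃ₐ[ℤ] R3, σ ω = ω ^ 2 := by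
  have hζ := IsCyclotomicExtension.zeta_spec 3 ℚ K3
  set ζ := IsCyclotomicExtension.zeta 3 ℚ K3
  have hζ2 : IsPrimitiveRoot (ζ ^ 2) 3 := hζ.pow_of_coprime 2 (by decide)
  have hirr : Irreducible (Polynomial.cyclotomic 3 ℚ) :=
    Polynomial.cyclotomic.irreducible_rat (by norm_num)
  set σ : K3 ≃ₐ[ℚ] K3 := IsCyclotomicExtension.fromZetaAut hζ2 hirr
  have hσζ : σ ζ = ζ ^ 2 := IsCyclotomicExtension.fromZetaAut_spec hζ2 hirr
  have hζ3 : ζ ^ 3 = 1 := by simpa using hζ.pow_eq_one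
  have hζ' : ζ ^ 2 + ζ + 1 = 0 := by
    have h : (ζ - 1) * (ζ ^ 2 + ζ + 1) = 0 := by linear_combination hζ3
    exact (mul_eq_zero.1 h).resolve_left (sub_ne_zero.2 (hζ.ne_one (by norm_num)))
  have hw : algebraMap R3 K3 ω ^ 2 + algebraMap R3 K3 ω + 1 = 0 := by
    simpa using congrArg (algebraMap R3 K3) hω
  refine ⟨galRestrict ℤ ℚ K3 R3 σ, IsFractionRing.injective R3 K3 ?_⟩
  rw [algebraMap_galRestrict_apply, map_pow]
  rcases eq_or_eq_sq_of_sq_add_add_one hζ' hw with h | h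
  · rw [h, hσζ]
  · rw [h, map_pow, hσζ]

section CubicSymbol

variable (J : R3 → R3 → R3) {ω : R3} (hω : ω ^ 2 + ω + 1 = 0)
  (hval : ∀ a π : R3, Prime π → eNorm π ≠ 3 → ¬ π ∣ a →
    J a π ∈ ({1, ω, ω ^ 2} : Set R3))
include hω hval

theorem cubicSymbol_pow_three {a π : R3} (hπ : Prime π) (hπ3 : ¬ π ∣ 3) (hπa : ¬ π ∣ a) :
    J a π ^ 3 = 1 :=
  pow_three_eq_one_of_mem hω (hval a π hπ (eNorm_ne_three_of_not_dvd hπ3) hπa)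

variable (hcong : ∀ a π : R3, Prime π → eNorm π ≠ 3 → ¬ π ∣ a →
    π ∣ a ^ ((eNorm π - 1) / 3) - J a π)
include hcong

theorem cubicSymbol_apply_conj_prime {σ : R3 ≃ₐ[ℤ] R3} (hσ : σ ω = ω ^ 2) {a π : R3}
    (ha : σ a = a) (hπ : Prime π) (hπ3 : ¬ π ∣ 3) (hπa : ¬ π ∣ a) :
    J a (σ π) = J a π ^ 2 := by
  have hN := eNorm_ne_three_of_not_dvd hπ3
  have hσπ : Prime (σ π) := (MulEquiv.prime_iff σ.toMulEquiv).2 hπ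
  have hσπ3 : ¬ σ π ∣ 3 := by rwa [← map_ofNat σ 3, map_dvd_iff]
  have hσπa : ¬ σ π ∣ a := by rwa [← ha, map_dvd_iff]
  have hNσ := eNorm_ne_three_of_not_dvd hσπ3
  have hJπ := hval a π hπ hN hπa
  have hcongσ : σ π ∣ a ^ ((eNorm π - 1) / 3) - J a π ^ 2 := by
    simpa only [map_sub, map_pow, ha, map_eq_sq_of_mem hσ hJπ]
      using map_dvd σ (hcong a π hπ hN hπa)
  have hdiff : σ π ∣ J a (σ π) - J a π ^ 2 := by
    have h := dvd_sub hcongσ (eNorm_map σ π ▸ hcong a (σ π) hσπ hNσ hσπa)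
    rwa [sub_sub_sub_cancel_left] at h
  exact (eq_or_sub_dvd_three_of_mem hω (hval a (σ π) hσπ hNσ hσπa)
    (sq_mem_of_mem hω hJπ)).resolve_right fun h3 => hσπ3 (hdiff.trans h3)

end CubicSymbol

theorem stmt12_general (J : R3 → R3 → R3) (ω : R3) (hω : ω ^ 2 + ω + 1 = 0)
    (hmul : ∀ a n m : R3, J a (n * m) = J a n * J a m)
    (hunit : ∀ (a : R3) (u : R3), IsUnit u → J a u = 1)
    (hval : ∀ a π : R3, Prime π → eNorm π ≠ 3 → ¬ π ∣ a →
      J a π ∈ ({1, ω, ω ^ 2} : Set R3))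
    (hcong : ∀ a π : R3, Prime π → eNorm π ≠ 3 → ¬ π ∣ a →
      π ∣ a ^ ((eNorm π - 1) / 3) - J a π)
    (d p : ℤ) (hco : IsCoprime d p) (h3 : IsCoprime d 3) :
    J (p : R3) (d : R3) = 1 := by
  obtain ⟨σ, hσ⟩ := exists_algEquiv_apply_eq_sq ω hω
  have hd : (d : R3) ≠ 0 := Int.cast_ne_zero.2 fun hd0 => by
    simp [hd0, isCoprime_zero_left, Int.isUnit_iff] at h3
  have h3' : IsCoprime (d : R3) 3 := by exact_mod_cast h3.intCast
  have hcop : ∀ π : R3, Prime π → π ∣ (d : R3) → ¬ π ∣ 3 ∧ ¬ π ∣ (p : R3) := fun π hπ hπd =>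
    ⟨fun h => hπ.not_isUnit (h3'.isUnit_of_dvd' hπd h),
      fun h => hπ.not_isUnit (hco.intCast.isUnit_of_dvd' hπd h)⟩
  have hconj : ∀ π : R3, Prime π → π ∣ (d : R3) → J p (σ π) = J p π ^ 2 := fun π hπ hπd =>
    cubicSymbol_apply_conj_prime J hω hval hcong hσ (map_intCast σ p) hπ (hcop π hπ hπd).1
      (hcop π hπ hπd).2
  have hcube : ∀ π : R3, Prime π → π ∣ (d : R3) → J p π ^ 3 = 1 := fun π hπ hπd =>
    cubicSymbol_pow_three J hω hval hπ (hcop π hπ hπd).1 (hcop π hπ hπd).2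
  have hsq : J p d * J p d = 1 := by
    have h := eq_one_of_forall_prime_dvd (fun n => J p n * J p (σ n))
      (fun a b => by simp only [hmul, map_mul]; ring) (fun u hu => by simp [hunit, hu])
      hd fun π hπ hπd => by simp only [hconj π hπ hπd, ← pow_succ', hcube π hπ hπd]
    simpa only [map_intCast] using h
  have hcube_d : J p d ^ 3 = 1 :=
    eq_one_of_forall_prime_dvd (fun n => J p n ^ 3) (fun a b => by simp only [hmul, mul_pow])
      (fun u hu => by simp [hunit, hu]) hd hcube
  linear_combination hcube_d - J p d * hsq

/-- If `d` and `p` are coprime rational integers with `gcd(d,3) = 1`, then the cubic residue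
symbol `(p/d)₃ = 1` in `ℤ[ω]`.  Here `J a n` denotes the cubic residue symbol `(a/n)₃`,
characterized as in the classical definition: completely multiplicative in the denominator,
with values in `{1, ω, ω²}` at primes `π ∤ a` with `N(π) ≠ 3` where
`J a π ≡ a^{(N(π)-1)/3} mod π`, vanishing at primes dividing `a`, and `J a 1 = 1` for units. -/
theorem stmt12 (J : R3 → R3 → R3) (ω : R3) (hω : ω ^ 2 + ω + 1 = 0)
    (hmul : ∀ a n m : R3, J a (n * m) = J a n * J a m)
    (hone : ∀ a : R3, J a 1 = 1)
    (hunit : ∀ (a : R3) (u : R3), IsUnit u → J a u = 1)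
    (hval : ∀ a π : R3, Prime π → eNorm π ≠ 3 → ¬ π ∣ a →
      J a π ∈ ({1, ω, ω ^ 2} : Set R3))
    (hcong : ∀ a π : R3, Prime π → eNorm π ≠ 3 → ¬ π ∣ a →
      π ∣ a ^ ((eNorm π - 1) / 3) - J a π)
    (hzero : ∀ a π : R3, Prime π → π ∣ a → J a π = 0)
    (d p : ℤ) (hco : IsCoprime d p) (h3 : IsCoprime d 3) :
    J (p : R3) (d : R3) = 1 :=
  stmt12_general J ω hω hmul hunit hval hcong d p hco h3
end

section
/- Every ideal of ℤ[i] coprime to 2 has a unique generator congruent to 1 modulo (1+i)³. -/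
/-!
The units of `ℤ[i]` are `±1, ±i`, and writing `z = a + bi`, divisibility by `1 + i` and by
`(1 + i)³ = -2 + 2i` reads `2 ∣ a + b`, respectively `4 ∣ a + b` and `4 ∣ a - b`. A generator `g` of
an ideal coprime to `2` is not divisible by `1 + i`, so `a + b` is odd; then `(a + b, a - b)` is
congruent to `(1, 1)`, `(-1, -1)`, `(1, -1)` or `(-1, 1)` mod `4`, and multiplying `g` by `1`, `-1`,
`-i` or `i` respectively is the only way to make the generator congruent to `1` mod `(1 + i)³`.
-/

open Zsqrtd

namespace GaussianInt

theorem isUnit_iff (u : GaussianInt) :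
    IsUnit u ↔ u = 1 ∨ u = -1 ∨ u = sqrtd ∨ u = -sqrtd := by
  constructor
  · intro hu
    have hnorm : u.re * u.re + u.im * u.im = 1 := by
      simpa [Zsqrtd.norm_def] using (Zsqrtd.norm_eq_one_iff' (by norm_num) u).mpr hu
    have hre : |u.re| ≤ 1 := abs_le_one_iff_mul_self_le_one.mpr (by nlinarith)
    have him : |u.im| ≤ 1 := abs_le_one_iff_mul_self_le_one.mpr (by nlinarith)
    rw [abs_le] at hre him
    obtain ⟨hre₁, hre₂⟩ := hre
    obtain ⟨him₁, him₂⟩ := him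
    interval_cases hr : u.re <;> interval_cases hi : u.im <;> simp at hnorm <;>
      simp [Zsqrtd.ext_iff, hr, hi]
  · rintro (rfl | rfl | rfl | rfl)
    · exact isUnit_one
    · exact isUnit_one.neg
    · exact .of_mul_eq_one (-sqrtd) (by decide)
    · exact .of_mul_eq_one sqrtd (by decide)

theorem one_add_sqrtd_dvd_iff (z : GaussianInt) :
    (1 + sqrtd : GaussianInt) ∣ z ↔ 2 ∣ z.re + z.im := by
  constructor
  · rintro ⟨w, rfl⟩
    exact ⟨w.re, by simp; ring⟩
  · rintro ⟨k, hk⟩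
    exact ⟨⟨k, z.im - k⟩, by ext <;> simp; omega⟩

theorem one_add_sqrtd_pow_three_dvd_iff (z : GaussianInt) :
    (1 + sqrtd : GaussianInt) ^ 3 ∣ z ↔ 4 ∣ z.re + z.im ∧ 4 ∣ z.re - z.im := by
  rw [show (1 + sqrtd : GaussianInt) ^ 3 = ⟨-2, 2⟩ by decide]
  constructor
  · rintro ⟨w, rfl⟩
    exact ⟨⟨-w.im, by simp; ring⟩, ⟨-w.re, by simp; ring⟩⟩
  · rintro ⟨⟨k, hk⟩, ⟨l, hl⟩⟩
    exact ⟨⟨-l, -k⟩, by ext <;> simp <;> omega⟩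

theorem not_one_add_sqrtd_dvd_of_isCoprime_two {g : GaussianInt} (hg : IsCoprime g 2) :
    ¬ (1 + sqrtd : GaussianInt) ∣ g := fun hdvd =>
  (isUnit_iff _).not.mpr (by decide) (hg.isUnit_of_dvd' hdvd ⟨1 - sqrtd, by decide⟩)

theorem exists_isUnit_pow_three_dvd_mul_sub_one {g : GaussianInt}
    (hg : ¬ (1 + sqrtd : GaussianInt) ∣ g) :
    ∃ u, IsUnit u ∧ (1 + sqrtd : GaussianInt) ^ 3 ∣ u * g - 1 := by
  rw [one_add_sqrtd_dvd_iff] at hg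
  simp [isUnit_iff, or_and_right, exists_or, one_add_sqrtd_pow_three_dvd_iff]
  omega

theorem eq_of_associated_of_pow_three_dvd_sub_one {g g' : GaussianInt} (h : Associated g g')
    (hg : (1 + sqrtd : GaussianInt) ^ 3 ∣ g - 1) (hg' : (1 + sqrtd : GaussianInt) ^ 3 ∣ g' - 1) :
    g = g' := by
  obtain ⟨v, rfl⟩ := h
  rw [one_add_sqrtd_pow_three_dvd_iff] at hg hg'
  rcases (isUnit_iff v).mp v.isUnit with hv | hv | hv | hv <;> rw [hv] at hg' ⊢
  · rw [mul_one]
  all_goals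
    exfalso
    simp at hg hg'
    omega

end GaussianInt

open GaussianInt in
/-- Every ideal of `ℤ[i]` coprime to `2` has a unique generator congruent to `1`
modulo `(1+i)³`. -/
theorem stmt17 (I : Ideal GaussianInt) (hI : I ⊔ Ideal.span {(2 : GaussianInt)} = ⊤) :
    ∃! g : GaussianInt, Ideal.span {g} = I ∧ (1 + Zsqrtd.sqrtd : GaussianInt) ^ 3 ∣ (g - 1) := by
  obtain ⟨g₀, rfl⟩ : ∃ g₀, I = Ideal.span {g₀} := ⟨_, (Ideal.span_singleton_generator I).symm⟩
  have hg₀ : IsCoprime g₀ 2 := by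
    rwa [← Ideal.isCoprime_span_singleton_iff, Ideal.isCoprime_iff_sup_eq]
  obtain ⟨u, hu, hug₀⟩ :=
    exists_isUnit_pow_three_dvd_mul_sub_one (not_one_add_sqrtd_dvd_of_isCoprime_two hg₀)
  refine ⟨u * g₀, ⟨Ideal.span_singleton_mul_left_unit hu g₀, hug₀⟩, ?_⟩
  rintro g ⟨hg, hg1⟩
  rw [← Ideal.span_singleton_mul_left_unit hu g₀, Ideal.span_singleton_eq_span_singleton] at hg
  exact eq_of_associated_of_pow_three_dvd_sub_one hg hg1 hug₀
end
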